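/- Simplification of constraints: if there is a non-trivial entailment P ⊩ Q in the Quill entailment system, then there exists a simple constraint set Q' such that P ⊩ Q' and Q' ⊩ Q. -/

import Mathlib

namespace Quill

/-- Types of Quill: type variables, user-defined type constructors, the linear
arrow `⊸`, the unrestricted arrow `→*`, sums `⊕`, and type application. -/
inductive Ty where
  | var : ℕ → Ty
  | con : ℕ → Ty
  | linArr : Ty
  | unArr : Ty
  | sum : Ty
  | app : Ty → Ty → Ty
deriving DecidableEq

/-- Fully applied binary type constructor: `Ty.fn f a b = f a b`. -/
def Ty.fn (f a b : Ty) : Ty := .app (.app f a) b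

/-- Free type variables of a type. -/
def ftvTy : Ty → Finset ℕ
  | .var t => {t}
  | .app a b => ftvTy a ∪ ftvTy b
  | _ => ∅

/-- Applying a type substitution to a type. -/
def substTy (s : ℕ → Ty) : Ty → Ty
  | .var t => s t
  | .app a b => .app (substTy s a) (substTy s b)
  | t => t

/-- Predicates: `Un τ`, `Fun τ`, and `τ ≥ υ`. -/
inductive Pred where
  | un : Ty → Pred
  | isFn : Ty → Pred
  | geq : Ty → Ty → Pred
deriving DecidableEq

def ftvPred : Pred → Finset ℕ
  | .un τ => ftvTy τ
  | .isFn τ => ftvTy τ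
  | .geq τ υ => ftvTy τ ∪ ftvTy υ

def substPred (s : ℕ → Ty) : Pred → Pred
  | .un τ => .un (substTy s τ)
  | .isFn τ => .isFn (substTy s τ)
  | .geq τ υ => .geq (substTy s τ) (substTy s υ)

def ftvPreds (P : List Pred) : Finset ℕ := P.foldr (fun π a => ftvPred π ∪ a) ∅

/-- Type schemes `∀ vars. preds ⇒ ty` (in normal form). -/
structure Scheme where
  vars : List ℕ
  preds : List Pred
  ty : Ty
deriving DecidableEq

/-- A monotype viewed as a scheme. -/
def Scheme.mono (τ : Ty) : Scheme := ⟨[], [], τ⟩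

def ftvScheme (σ : Scheme) : Finset ℕ := (ftvPreds σ.preds ∪ ftvTy σ.ty) \ σ.vars.toFinset

/-- (Multi)environments: multisets of typing assumptions `x : σ`. -/
abbrev Env := Multiset (ℕ × Scheme)

def ftvEnv (Γ : Env) : Finset ℕ := Γ.toFinset.sup fun b => ftvScheme b.2

def inDom (x : ℕ) (Γ : Env) : Prop := ∃ σ, (x, σ) ∈ Γ

/-- A multienvironment is consistent when repeated assumptions agree. -/
def Consistent (Γ : Env) : Prop := ∀ x σ σ', (x, σ) ∈ Γ → (x, σ') ∈ Γ → σ = σ'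

abbrev Subst := ℕ → Ty

/-- The substitution `[ῡ/t̄]`. -/
def mkSubst (ts : List ℕ) (us : List Ty) : Subst :=
  fun t => ((ts.zip us).lookup t).getD (.var t)

/-- The substitution `[υ/t]`. -/
def oneSubst (t : ℕ) (υ : Ty) : Subst := fun u => if u = t then υ else .var u

def idSubst : Subst := Ty.var

/-- Composition of substitutions: `(compS f g) τ = f (g τ)`. -/
def compS (f g : Subst) : Subst := fun t => substTy f (g t)

def substScheme (s : Subst) (σ : Scheme) : Scheme :=
  let s' : Subst := fun t => if t ∈ σ.vars then Ty.var t else s t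
  ⟨σ.vars, σ.preds.map (substPred s'), substTy s' σ.ty⟩

def substEnv (s : Subst) (Γ : Env) : Env := Γ.map fun b => (b.1, substScheme s b.2)

/-- Restriction `Γ|_A` of an environment to the term variables in `A`. -/
def restrict (Γ : Env) (A : Finset ℕ) : Env := Γ.filter fun b => b.1 ∈ A

/-- `Gen(Γ, Q ⇒ τ)`: generalize over the free type variables not free in `Γ`. -/
noncomputable def gen (Γ : Env) (Q : List Pred) (τ : Ty) : Scheme :=
  ⟨((ftvPreds Q ∪ ftvTy τ) \ ftvEnv Γ).toList, Q, τ⟩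

/-- An instantiation of a constructor signature
`K : (∀ tvars. ∃ evars. preds ⇒ arg) →* res`. -/
structure ConSig where
  tvars : List ℕ
  evars : List ℕ
  preds : List Pred
  arg : Ty
  res : Ty

/-- Entailment for Quill predicates, parameterized by the ambient constructor
signature `Sig` (a relation collecting all instantiations of the signatures)
and by a restriction `ok` on the constraints to which the assumption rule may
be applied (`ok = fun _ => True` gives ordinary entailment). -/
inductive Ent (Sig : ℕ → ConSig → Prop) (ok : Pred → Prop) : List Pred → Pred → Prop where
  | assum {P π} : π ∈ P → ok π → Ent Sig ok P π
  | funLin {P} : Ent Sig ok P (.isFn .linArr)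
  | funUn {P} : Ent Sig ok P (.isFn .unArr)
  | unUnArr {P τ υ} : Ent Sig ok P (.un (Ty.fn .unArr τ υ))
  | unSum {P τ₁ τ₂} : Ent Sig ok P (.un τ₁) → Ent Sig ok P (.un τ₂) →
      Ent Sig ok P (.un (Ty.fn .sum τ₁ τ₂))
  | unData {P K cs} : Sig K cs →
      Ent Sig ok (P ++ cs.preds ++ cs.tvars.map fun t => Pred.un (.var t)) (.un cs.arg) →
      Ent Sig ok P (.un cs.res)
  | geqUnArr {P τ υ υ'} : Ent Sig ok P (.un τ) → Ent Sig ok P (.geq τ (Ty.fn .unArr υ υ'))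
  | geqLinArr {P τ υ υ'} : Ent Sig ok P (.geq τ (Ty.fn .linArr υ υ'))
  | geqLiftR {P τ φ t} : Ent Sig ok P (.geq τ (.app φ (.var t))) →
      t ∉ ftvPreds P → t ∉ ftvTy τ → t ∉ ftvTy φ → Ent Sig ok P (.geq τ φ)
  | geqLiftL {P τ φ t} : Ent Sig ok P (.geq (.app τ (.var t)) φ) →
      t ∉ ftvPreds P → t ∉ ftvTy τ → t ∉ ftvTy φ → Ent Sig ok P (.geq τ φ)

/-- Ordinary entailment `P ⊩ π`. -/
def Entails (Sig : ℕ → ConSig → Prop) (P : List Pred) (π : Pred) : Prop :=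
  Ent Sig (fun _ => True) P π

/-- Entailment of a set of predicates `P ⊩ Q`. -/
def EntAll (Sig : ℕ → ConSig → Prop) (P Q : List Pred) : Prop := ∀ π ∈ Q, Entails Sig P π

/-- `P ⊢ Un σ`: the `Un` predicate lifted to type schemes. -/
def UnScheme (Sig : ℕ → ConSig → Prop) (P : List Pred) (σ : Scheme) : Prop :=
  Entails Sig (P ++ σ.preds ++ σ.vars.map fun t => Pred.un (.var t)) (.un σ.ty)

/-- `P ⊢ Un Γ`: the `Un` predicate lifted to environments. -/
def UnEnv (Sig : ℕ → ConSig → Prop) (P : List Pred) (Γ : Env) : Prop :=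
  ∀ b ∈ Γ, UnScheme Sig P b.2

/-- `P ⊢ σ ≥ φ`: the `≥` predicate lifted to type schemes. -/
def GeqScheme (Sig : ℕ → ConSig → Prop) (P : List Pred) (σ : Scheme) (φ : Ty) : Prop :=
  Entails Sig (P ++ σ.preds ++ σ.vars.map fun t => Pred.un (.var t)) (.geq σ.ty φ)

/-- `P ⊢ Γ ≥ φ`: the `≥` predicate lifted to environments. -/
def GeqEnv (Sig : ℕ → ConSig → Prop) (P : List Pred) (Γ : Env) (φ : Ty) : Prop :=
  ∀ b ∈ Γ, GeqScheme Sig P b.2 φ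

/-- Instantiation: `(P ⇒ τ) ≼ σ`. -/
def QInst (Sig : ℕ → ConSig → Prop) (P : List Pred) (τ : Ty) (σ : Scheme) : Prop :=
  ∃ us : List Ty, us.length = σ.vars.length ∧
    τ = substTy (mkSubst σ.vars us) σ.ty ∧
    EntAll Sig P (σ.preds.map (substPred (mkSubst σ.vars us)))

/-- Instance ordering on qualified type schemes: `(P | σ) ≼ (P' | σ')`. -/
def QSInst (Sig : ℕ → ConSig → Prop) (P : List Pred) (σ : Scheme)
    (P' : List Pred) (σ' : Scheme) : Prop :=
  ∃ us : List Ty, us.length = σ'.vars.length ∧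
    σ.ty = substTy (mkSubst σ'.vars us) σ'.ty ∧
    EntAll Sig (P ++ σ.preds) (P' ++ σ'.preds.map (substPred (mkSubst σ'.vars us)))

/-- Terms of Quill. -/
inductive Tm where
  | var : ℕ → Tm
  | con : ℕ → Tm → Tm
  | lam : ℕ → Tm → Tm
  | app : Tm → Tm → Tm
  | inl : Tm → Tm
  | inr : Tm → Tm
  | cas : Tm → ℕ → Tm → ℕ → Tm → Tm
  | lett : ℕ → Tm → Tm → Tm
  | letcon : ℕ → ℕ → Tm → Tm → Tm
deriving DecidableEq

/-- Free term variables. -/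
def fvTm : Tm → Finset ℕ
  | .var x => {x}
  | .con _ M => fvTm M
  | .lam x M => fvTm M \ {x}
  | .app M N => fvTm M ∪ fvTm N
  | .inl M => fvTm M
  | .inr M => fvTm M
  | .cas M x N y N' => fvTm M ∪ (fvTm N \ {x}) ∪ (fvTm N' \ {y})
  | .lett x M N => fvTm M ∪ (fvTm N \ {x})
  | .letcon _ x M N => fvTm M ∪ (fvTm N \ {x})

/-- The syntax-directed Quill typing judgment `P | Γ ⊢S M : τ`. -/
inductive SD (Sig : ℕ → ConSig → Prop) : List Pred → Env → Tm → Ty → Prop where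
  | var {P Δ x σ τ} :
      QInst Sig P τ σ →
      UnEnv Sig P Δ →
      SD Sig P ((x, σ) ::ₘ Δ) (.var x) τ
  | lam {P Γ x M τ υ φ} :
      SD Sig P ((x, Scheme.mono τ) ::ₘ Γ) M υ →
      ¬ inDom x Γ →
      Entails Sig P (.isFn φ) →
      GeqEnv Sig P Γ φ →
      SD Sig P Γ (.lam x M) (Ty.fn φ τ υ)
  | app {P Γ Γ' Δ M N φ τ υ} :
      SD Sig P (Γ + Δ) M (Ty.fn φ τ υ) →
      SD Sig P (Γ' + Δ) N τ →
      Entails Sig P (.isFn φ) →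
      UnEnv Sig P Δ →
      SD Sig P (Γ + Γ' + Δ) (.app M N) υ
  | inl {P Γ M τ₁ τ₂} : SD Sig P Γ M τ₁ → SD Sig P Γ (.inl M) (Ty.fn .sum τ₁ τ₂)
  | inr {P Γ M τ₁ τ₂} : SD Sig P Γ M τ₂ → SD Sig P Γ (.inr M) (Ty.fn .sum τ₁ τ₂)
  | cas {P Γ Γ' Δ M x N y N' τ₁ τ₂ υ} :
      SD Sig P (Γ + Δ) M (Ty.fn .sum τ₁ τ₂) →
      UnEnv Sig P Δ →
      SD Sig P ((x, Scheme.mono τ₁) ::ₘ (Γ' + Δ)) N υ →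
      ¬ inDom x (Γ' + Δ) →
      SD Sig P ((y, Scheme.mono τ₂) ::ₘ (Γ' + Δ)) N' υ →
      ¬ inDom y (Γ' + Δ) →
      SD Sig P (Γ + Γ' + Δ) (.cas M x N y N') υ
  | lett {Q P Γ Γ' Δ x M N τ υ} :
      SD Sig Q (Γ + Δ) M τ →
      SD Sig P ((x, gen (Γ + Δ) Q τ) ::ₘ (Γ' + Δ)) N υ →
      ¬ inDom x (Γ' + Δ) →
      UnEnv Sig P Δ →
      SD Sig P (Γ + Γ' + Δ) (.lett x M N) υ
  | make {P Γ K cs us M} :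
      Sig K cs →
      us.length = cs.evars.length →
      EntAll Sig P (cs.preds.map (substPred (mkSubst cs.evars us))) →
      SD Sig P Γ M (substTy (mkSubst cs.evars us) cs.arg) →
      (∀ t ∈ cs.tvars, t ∉ ftvPreds P ∧ t ∉ ftvEnv Γ) →
      SD Sig P Γ (.con K M) cs.res
  | brk {P Γ Γ' Δ K cs us x M N υ'} :
      Sig K cs →
      SD Sig P (Γ + Δ) M cs.res →
      UnEnv Sig P Δ →
      us.length = cs.tvars.length →
      SD Sig (P ++ cs.preds.map (substPred (mkSubst cs.tvars us)))
        ((x, Scheme.mono (substTy (mkSubst cs.tvars us) cs.arg)) ::ₘ (Γ' + Δ)) N υ' →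
      ¬ inDom x (Γ' + Δ) →
      (∀ u ∈ cs.evars,
        u ∉ ftvPreds P ∧ u ∉ ftvEnv Γ ∧ u ∉ ftvEnv Γ' ∧ u ∉ ftvEnv Δ ∧ u ∉ ftvTy υ') →
      SD Sig P (Γ + Γ' + Δ) (.letcon K x M N) υ'

/-- The declarative Quill typing judgment `P | H ⊢ M : σ` on multienvironments,
with explicit contraction and weakening. -/
inductive QT (Sig : ℕ → ConSig → Prop) : List Pred → Env → Tm → Scheme → Prop where
  | var {P x σ} : QT Sig P {(x, σ)} (.var x) σ
  | contr {P H x σ M σ'} :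
      QT Sig P ((x, σ) ::ₘ (x, σ) ::ₘ H) M σ' →
      UnScheme Sig P σ →
      QT Sig P ((x, σ) ::ₘ H) M σ'
  | weak {P H y σ M σ'} :
      QT Sig P H M σ' →
      UnScheme Sig P σ →
      QT Sig P ((y, σ) ::ₘ H) M σ'
  | lam {P H x M τ υ φ} :
      QT Sig P ((x, Scheme.mono τ) ::ₘ H) M (Scheme.mono υ) →
      ¬ inDom x H →
      Entails Sig P (.isFn φ) →
      GeqEnv Sig P H φ →
      QT Sig P H (.lam x M) (Scheme.mono (Ty.fn φ τ υ))
  | app {P H H' M N φ τ υ} :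
      QT Sig P H M (Scheme.mono (Ty.fn φ τ υ)) →
      QT Sig P H' N (Scheme.mono τ) →
      Entails Sig P (.isFn φ) →
      Consistent (H + H') →
      QT Sig P (H + H') (.app M N) (Scheme.mono υ)
  | inl {P H M τ₁ τ₂} :
      QT Sig P H M (Scheme.mono τ₁) → QT Sig P H (.inl M) (Scheme.mono (Ty.fn .sum τ₁ τ₂))
  | inr {P H M τ₁ τ₂} :
      QT Sig P H M (Scheme.mono τ₂) → QT Sig P H (.inr M) (Scheme.mono (Ty.fn .sum τ₁ τ₂))
  | cas {P H H' M x N y N' τ₁ τ₂ υ} :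
      QT Sig P H M (Scheme.mono (Ty.fn .sum τ₁ τ₂)) →
      QT Sig P ((x, Scheme.mono τ₁) ::ₘ H') N (Scheme.mono υ) →
      ¬ inDom x H' →
      QT Sig P ((y, Scheme.mono τ₂) ::ₘ H') N' (Scheme.mono υ) →
      ¬ inDom y H' →
      Consistent (H + H') →
      QT Sig P (H + H') (.cas M x N y N') (Scheme.mono υ)
  | lett {P H H' x M N σ υ} :
      QT Sig P H M σ →
      QT Sig P ((x, σ) ::ₘ H') N (Scheme.mono υ) →
      ¬ inDom x H' →
      Consistent (H + H') →
      QT Sig P (H + H') (.lett x M N) (Scheme.mono υ)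
  | impI {P π H M Q τ} :
      QT Sig (π :: P) H M ⟨[], Q, τ⟩ →
      QT Sig P H M ⟨[], π :: Q, τ⟩
  | impE {P H M π Q τ} :
      QT Sig P H M ⟨[], π :: Q, τ⟩ →
      Entails Sig P π →
      QT Sig P H M ⟨[], Q, τ⟩
  | allI {P H M t ts Q τ} :
      QT Sig P H M ⟨ts, Q, τ⟩ →
      t ∉ ftvPreds P → t ∉ ftvEnv H →
      QT Sig P H M ⟨t :: ts, Q, τ⟩
  | allE {P H M t ts Q τ υ} :
      QT Sig P H M ⟨t :: ts, Q, τ⟩ →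
      (∀ u ∈ ts, u ≠ t ∧ u ∉ ftvTy υ) →
      QT Sig P H M ⟨ts, Q.map (substPred (oneSubst t υ)), substTy (oneSubst t υ) τ⟩
  | make {P H K cs us M} :
      Sig K cs →
      us.length = cs.evars.length →
      EntAll Sig P (cs.preds.map (substPred (mkSubst cs.evars us))) →
      QT Sig P H M (Scheme.mono (substTy (mkSubst cs.evars us) cs.arg)) →
      (∀ t ∈ cs.tvars, t ∉ ftvPreds P ∧ t ∉ ftvEnv H) →
      QT Sig P H (.con K M) (Scheme.mono cs.res)
  | brk {P H H' K cs us x M N υ'} :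
      Sig K cs →
      QT Sig P H M (Scheme.mono cs.res) →
      us.length = cs.tvars.length →
      QT Sig (P ++ cs.preds.map (substPred (mkSubst cs.tvars us)))
        ((x, Scheme.mono (substTy (mkSubst cs.tvars us) cs.arg)) ::ₘ H') N (Scheme.mono υ') →
      ¬ inDom x H' →
      (∀ u ∈ cs.evars,
        u ∉ ftvPreds P ∧ u ∉ ftvEnv H ∧ u ∉ ftvEnv H' ∧ u ∉ ftvTy υ') →
      Consistent (H + H') →
      QT Sig P (H + H') (.letcon K x M N) (Scheme.mono υ')

/-- `P ⊢ H ≈ Γ`: the environment `Γ` approximates the multienvironment `H`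
under `P`: they contain the same assumptions, and any assumption repeated in
`H` is unrestricted. -/
def Approx (Sig : ℕ → ConSig → Prop) (P : List Pred) (H Γ : Env) : Prop :=
  (∀ x σ, (x, σ) ∈ H ↔ (x, σ) ∈ Γ) ∧
  ∀ x σ, 2 ≤ H.count (x, σ) → UnScheme Sig P σ
/-- A constraint is simple (in some type variable `t`): it has the form
`Un t`, `Fun t`, or `τ ≥ t`. -/
def SimplePred : Pred → Prop := fun π =>
  ∃ t, π = .un (.var t) ∨ π = .isFn (.var t) ∨ ∃ τ, π = .geq τ (.var t)

/-- The improving substitution for `X` in the (simple) constraint set `Q`: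
`t ↦ →*` if `Un t ∈ Q`, and `t ↦ ⊸` otherwise (for `t ∈ X`). -/
def improvingSubst (X : Finset ℕ) (Q : List Pred) : Subst := fun t =>
  if t ∈ X then (if Pred.un (.var t) ∈ Q then Ty.unArr else Ty.linArr) else .var t

/-- `S` improves `X` in `P`: `S` is the improving substitution for `X` in some
simplification of `P`. -/
def Improves (Sig : ℕ → ConSig → Prop) (S : Subst) (X : Finset ℕ) (P : List Pred) : Prop :=
  ∃ Q', (∀ π ∈ Q', SimplePred π) ∧ EntAll Sig P Q' ∧ EntAll Sig Q' P ∧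
    S = improvingSubst X Q'

/-- Declarative specification of `GenI(Γ, P ⇒ τ) = ∀(ftv(S P, τ)). S P ⇒ τ`
where `S` improves `ftv(P) \ ftv(Γ, τ)` in `P`. -/
def GenIRel (Sig : ℕ → ConSig → Prop) (Γ : Env) (P : List Pred) (τ : Ty) (σ : Scheme) : Prop :=
  ∃ S, Improves Sig S ((ftvPreds P \ ftvEnv Γ) \ ftvTy τ) P ∧
    σ = ⟨(ftvPreds (P.map (substPred S)) ∪ ftvTy τ).toList, P.map (substPred S), τ⟩

/-- Declarative specification of `Weaken(x, σ, A)`. -/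
def WeakenP (Sig : ℕ → ConSig → Prop) (Wk : List Pred) (x : ℕ) (σ : Scheme)
    (A : Finset ℕ) : Prop :=
  (x ∈ A ∧ Wk = []) ∨ (x ∉ A ∧ UnScheme Sig Wk σ)

/-- A list of fresh type variables, avoiding `A`. -/
def FreshList (us : List ℕ) (A : Finset ℕ) : Prop := us.Nodup ∧ ∀ u ∈ us, u ∉ A

/-- Algorithm `M` for Quill type inference, as a relation:
`AlgM Sig mgu S X Γ M τ P S' A` means `M(S, X; Γ ⊢ M : τ) = (P, S', A)`,
where `mgu X τ υ` is the unification procedure (the variables in `X` are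
rigid) and `A` is the set of term variables used in `M`. -/
inductive AlgM (Sig : ℕ → ConSig → Prop) (mgu : Finset ℕ → Ty → Ty → Option Subst) :
    Subst → Finset ℕ → Env → Tm → Ty → List Pred → Subst → Finset ℕ → Prop where
  | var {S X Γ x σ us U τ} :
      (x, σ) ∈ substEnv S Γ →
      FreshList us (X ∪ ftvEnv (substEnv S Γ) ∪ ftvTy (substTy S τ)) →
      us.length = σ.vars.length →
      mgu X (substTy (mkSubst σ.vars (us.map .var)) σ.ty) (substTy S τ) = some U →
      AlgM Sig mgu S X Γ (.var x) τ
        (σ.preds.map (substPred (mkSubst σ.vars (us.map .var)))) (compS U S) {x}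
  | lam {S X Γ x M τ u₁ u₂ u₃ U P S' A Lq Wk} :
      FreshList [u₁, u₂, u₃] (X ∪ ftvEnv (substEnv S Γ) ∪ ftvTy (substTy S τ)) →
      mgu X (substTy S τ) (Ty.fn (.var u₁) (.var u₂) (.var u₃)) = some U →
      AlgM Sig mgu (compS U S) X ((x, Scheme.mono (.var u₂)) ::ₘ Γ) M (.var u₃) P S' A →
      GeqEnv Sig Lq (restrict Γ A) (.var u₁) →
      WeakenP Sig Wk x (Scheme.mono (.var u₂)) A →
      AlgM Sig mgu S X Γ (.lam x M) τ (P ++ [.isFn (.var u₁)] ++ Lq ++ Wk) S' (A \ {x})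
  | app {S X Γ M N τ u₁ u₂ P R A P' R' A' Uq} :
      FreshList [u₁, u₂] (X ∪ ftvEnv (substEnv S Γ) ∪ ftvTy (substTy S τ)) →
      AlgM Sig mgu S X Γ M (Ty.fn (.var u₁) (.var u₂) τ) P R A →
      AlgM Sig mgu R X Γ N (.var u₂) P' R' A' →
      UnEnv Sig Uq (restrict Γ (A ∩ A')) →
      AlgM Sig mgu S X Γ (.app M N) τ (P ++ P' ++ [.isFn (.var u₁)] ++ Uq) R' (A ∪ A')
  | inl {S X Γ M τ u₁ u₂ U P R A} :
      FreshList [u₁, u₂] (X ∪ ftvEnv (substEnv S Γ) ∪ ftvTy (substTy S τ)) →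
      mgu X (substTy S τ) (Ty.fn .sum (.var u₁) (.var u₂)) = some U →
      AlgM Sig mgu (compS U S) X Γ M (.var u₁) P R A →
      AlgM Sig mgu S X Γ (.inl M) τ P R A
  | inr {S X Γ M τ u₁ u₂ U P R A} :
      FreshList [u₁, u₂] (X ∪ ftvEnv (substEnv S Γ) ∪ ftvTy (substTy S τ)) →
      mgu X (substTy S τ) (Ty.fn .sum (.var u₁) (.var u₂)) = some U →
      AlgM Sig mgu (compS U S) X Γ M (.var u₂) P R A →
      AlgM Sig mgu S X Γ (.inr M) τ P R A
  | cas {S X Γ M x N y N' τ u₁ u₂ PM R AM PN R' AN PN' R'' AN' Uq Wx Wy} :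
      FreshList [u₁, u₂] (X ∪ ftvEnv (substEnv S Γ) ∪ ftvTy (substTy S τ)) →
      AlgM Sig mgu S X Γ M (Ty.fn .sum (.var u₁) (.var u₂)) PM R AM →
      AlgM Sig mgu R X ((x, Scheme.mono (.var u₁)) ::ₘ Γ) N τ PN R' AN →
      AlgM Sig mgu R' X ((y, Scheme.mono (.var u₂)) ::ₘ Γ) N' τ PN' R'' AN' →
      UnEnv Sig Uq (restrict Γ ((AN \ AN') ∪ (AN' \ AN) ∪ (AM ∩ (AN ∪ AN')))) →
      WeakenP Sig Wx x (Scheme.mono (.var u₁)) AN →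
      WeakenP Sig Wy y (Scheme.mono (.var u₂)) AN' →
      AlgM Sig mgu S X Γ (.cas M x N y N') τ
        (PM ++ PN ++ PN' ++ Uq ++ Wx ++ Wy) R'' (AM ∪ AN ∪ AN')
  | lett {S X Γ x M N τ u₁ P R A σ P' R' A' Uq Wk} :
      FreshList [u₁] (X ∪ ftvEnv (substEnv S Γ) ∪ ftvTy (substTy S τ)) →
      AlgM Sig mgu S X Γ M (.var u₁) P R A →
      GenIRel Sig (substEnv R Γ) (P.map (substPred R)) (substTy R (.var u₁)) σ →
      AlgM Sig mgu R X ((x, σ) ::ₘ Γ) N τ P' R' A' →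
      UnEnv Sig Uq (restrict Γ (A ∩ A')) →
      WeakenP Sig Wk x σ A' →
      AlgM Sig mgu S X Γ (.lett x M N) τ (P' ++ Uq ++ Wk) R' (A ∪ (A' \ {x}))
  | make {S X Γ K M τ cs us U P R A} :
      Sig K cs →
      FreshList us (X ∪ ftvEnv (substEnv S Γ) ∪ ftvTy (substTy S τ)) →
      us.length = cs.evars.length →
      mgu X cs.res (substTy S τ) = some U →
      AlgM Sig mgu (compS U S) (X ∪ cs.tvars.toFinset) Γ M
        (substTy (mkSubst cs.evars (us.map .var)) cs.arg) P R A →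
      (∀ t ∈ cs.tvars, t ∉ ftvPreds P ∧ t ∉ ftvEnv (substEnv R Γ)) →
      AlgM Sig mgu S X Γ (.con K M) τ
        (P ++ cs.preds.map (substPred (mkSubst cs.evars (us.map .var)))) R A
  | brk {S X Γ K x M N τ cs us PM R AM PN PN' R' AN Wk Uq} :
      Sig K cs →
      AlgM Sig mgu S X Γ M cs.res PM R AM →
      FreshList us (X ∪ ftvEnv (substEnv R Γ) ∪ ftvTy (substTy R τ)) →
      us.length = cs.tvars.length →
      AlgM Sig mgu R (X ∪ cs.evars.toFinset)
        ((x, Scheme.mono (substTy (mkSubst cs.tvars (us.map .var)) cs.arg)) ::ₘ Γ)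
        N τ PN R' AN →
      (∀ t ∈ cs.evars,
        t ∉ ftvPreds PN ∧ t ∉ ftvEnv (substEnv R' Γ) ∧ t ∉ ftvTy (substTy R' τ)) →
      EntAll Sig (PN' ++ cs.preds.map (substPred (mkSubst cs.tvars (us.map .var)))) PN →
      WeakenP Sig Wk x (Scheme.mono (substTy (mkSubst cs.tvars (us.map .var)) cs.arg)) AN →
      UnEnv Sig Uq (restrict Γ (AM ∩ AN)) →
      AlgM Sig mgu S X Γ (.letcon K x M N) τ (PM ++ PN' ++ Wk ++ Uq) R' (AM ∪ (AN \ {x}))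

/-! Take `Q'` to be the simple constraints of `P`. Then `P ⊩ Q'` by assumption, and a
non-trivial derivation of `P ⊩ π` consults only simple assumptions, so it replays verbatim over
`Q'`; the freshness side conditions survive because `ftv(Q') ⊆ ftv(P)`. -/

lemma mem_ftvPreds {t : ℕ} {P : List Pred} : t ∈ ftvPreds P ↔ ∃ π ∈ P, t ∈ ftvPred π := by
  induction P with
  | nil => simp [ftvPreds]
  | cons π P ih =>
    change t ∈ ftvPred π ∪ ftvPreds P ↔ _
    simp [ih]

lemma ftvPreds_mono {P P' : List Pred} (h : ∀ π ∈ P', π ∈ P) : ftvPreds P' ⊆ ftvPreds P := by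
  intro t ht
  obtain ⟨π, hπ, htπ⟩ := mem_ftvPreds.1 ht
  exact mem_ftvPreds.2 ⟨π, h π hπ, htπ⟩

lemma ftvPreds_append (P P' : List Pred) : ftvPreds (P ++ P') = ftvPreds P ∪ ftvPreds P' := by
  ext t
  simp only [mem_ftvPreds, List.mem_append, Finset.mem_union]
  grind

/-- `hftv` keeps the freshness side conditions of `geqLiftR` and `geqLiftL` valid in `P'`. -/
theorem Ent.mono {Sig : ℕ → ConSig → Prop} {ok ok' : Pred → Prop} {P P' : List Pred} {π : Pred}
    (h : Ent Sig ok P π) (hok : ∀ ρ, ok ρ → ok' ρ) (hP : ∀ ρ ∈ P, ok ρ → ρ ∈ P')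
    (hftv : ftvPreds P' ⊆ ftvPreds P) : Ent Sig ok' P' π := by
  induction h generalizing P' with
  | assum hmem hρ => exact .assum (hP _ hmem hρ) (hok _ hρ)
  | funLin => exact .funLin
  | funUn => exact .funUn
  | unUnArr => exact .unUnArr
  | unSum _ _ ih₁ ih₂ => exact .unSum (ih₁ hP hftv) (ih₂ hP hftv)
  | unData hK _ ih =>
    refine .unData hK (ih ?_ ?_)
    · intro ρ hρ hρok
      simp only [List.mem_append] at hρ ⊢
      rcases hρ with (hρ | hρ) | hρ
      · exact Or.inl (Or.inl (hP ρ hρ hρok))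
      · exact Or.inl (Or.inr hρ)
      · exact Or.inr hρ
    · simp only [ftvPreds_append]
      gcongr
  | geqUnArr _ ih => exact .geqUnArr (ih hP hftv)
  | geqLinArr => exact .geqLinArr
  | geqLiftR _ ht hτ hφ ih => exact .geqLiftR (ih hP hftv) (fun h => ht (hftv h)) hτ hφ
  | geqLiftL _ ht hτ hφ ih => exact .geqLiftL (ih hP hftv) (fun h => ht (hftv h)) hτ hφ

open Classical in
/-- **Simplification of constraints**: if there is a non-trivial entailment
`P ⊩ Q` (one in which the assumption rule is only used for simple
constraints), then there is a simple constraint set `Q'` with `P ⊩ Q'` and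
`Q' ⊩ Q`. -/
theorem quill_simplification
    (Sig : ℕ → ConSig → Prop) {P Q : List Pred}
    (h : ∀ π ∈ Q, Ent Sig SimplePred P π) :
    ∃ Q' : List Pred, (∀ π ∈ Q', SimplePred π) ∧ EntAll Sig P Q' ∧ EntAll Sig Q' Q := by
  refine ⟨P.filter (SimplePred ·), ?simple, ?entailed, ?entails⟩
  case simple => exact fun π hπ => of_decide_eq_true (List.mem_filter.1 hπ).2
  case entailed => exact fun π hπ => .assum (List.mem_filter.1 hπ).1 trivial
  case entails =>
    refine fun π hπ => (h π hπ).mono (fun _ _ => trivial) ?_ (ftvPreds_mono ?_)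
    · exact fun ρ hρ hρs => List.mem_filter.2 ⟨hρ, decide_eq_true hρs⟩
    · exact fun ρ hρ => (List.mem_filter.1 hρ).1

end Quill
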